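/- arXiv:2108.02298 — 5 statements merged into one kernel-verified Lean document; each statement's English description precedes it below -/
import Mathlib

section
/- Let G be a group with complementary subgroups W (normal) and H, and let φ : O ⊂ W → H be intrinsic C_L-Lipschitz, i.e. ‖φ(a)^{-1}φ(b)‖ ≤ C_L ‖φ(a)^{-1} a^{-1} b φ(a)‖ for all a, b ∈ O, where ‖·‖ is a homogeneous norm and c₀(‖p_W‖+‖p_H‖) ≤ ‖p_W p_H‖ for all p_W ∈ W, p_H ∈ H with c₀ ∈ (0,1). Then for p = a·φ(a) and q = b·φ(b) in graph(φ): c₀‖φ(a)^{-1}a^{-1}bφ(a)‖ ≤ ‖p^{-1}q‖ ≤ (1 + C_L)‖φ(a)^{-1}a^{-1}bφ(a)‖. -/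
/-- for an intrinsic `C_L`-Lipschitz map `φ : O ⊂ W → H` with `W` normal and `H`
complementary, for points `p = aφ(a)`, `q = bφ(b)` of the graph one has
`c₀‖φ(a)⁻¹a⁻¹bφ(a)‖ ≤ ‖p⁻¹q‖ ≤ (1+C_L)‖φ(a)⁻¹a⁻¹bφ(a)‖`. -/
theorem stmt_7 {G : Type*} [Group G] (W H : Subgroup G) [W.Normal]
    (norm : G → ℝ)
    (htri : ∀ p q : G, norm (p * q) ≤ norm p + norm q)
    (c₀ : ℝ) (hc₀ : c₀ ∈ Set.Ioo (0:ℝ) 1)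
    (hsplit : ∀ pW ∈ W, ∀ pH ∈ H, c₀ * (norm pW + norm pH) ≤ norm (pW * pH))
    (O : Set G) (hO : O ⊆ (W : Set G)) (φ : G → G) (hφ : ∀ a ∈ O, φ a ∈ H)
    (C_L : ℝ) (hC_L : 0 ≤ C_L)
    (hlip : ∀ a ∈ O, ∀ b ∈ O,
      norm ((φ a)⁻¹ * φ b) ≤ C_L * norm ((φ a)⁻¹ * a⁻¹ * b * φ a))
    (a b : G) (ha : a ∈ O) (hb : b ∈ O) :
    c₀ * norm ((φ a)⁻¹ * a⁻¹ * b * φ a) ≤ norm ((a * φ a)⁻¹ * (b * φ b)) ∧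
    norm ((a * φ a)⁻¹ * (b * φ b)) ≤ (1 + C_L) * norm ((φ a)⁻¹ * a⁻¹ * b * φ a) := by
  obtain ⟨hc0, hc1⟩ := hc₀
  set PW := (φ a)⁻¹ * a⁻¹ * b * φ a with hPW
  set PH := (φ a)⁻¹ * φ b with hPH
  have hdecomp : (a * φ a)⁻¹ * (b * φ b) = PW * PH := by
    rw [hPW, hPH]; group
  have hPWmem : PW ∈ W := by
    have hab : a⁻¹ * b ∈ W := W.mul_mem (W.inv_mem (hO ha)) (hO hb)
    have := Subgroup.Normal.conj_mem ‹W.Normal› _ hab (φ a)⁻¹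
    simpa [hPW, mul_assoc] using this
  have hPHmem : PH ∈ H := H.mul_mem (H.inv_mem (hφ a ha)) (hφ b hb)
  have hone : (0:ℝ) ≤ norm 1 := by
    have := htri 1 1
    simp at this; linarith
  have hPHnn : (0:ℝ) ≤ norm PH := by
    have := hsplit 1 W.one_mem PH hPHmem
    simp at this
    nlinarith
  have hsp := hsplit PW hPWmem PH hPHmem
  rw [hdecomp]
  constructor
  · nlinarith
  · have h1 := htri PW PH
    have h2 := hlip a ha b hb
    nlinarith
end

section
/- Let f : [0,1] × ℝ → ℝ be continuous and bounded. For y ∈ ℝ let γ_y : [0,1] → ℝ denote the minimal solution of the ODE γ' = f(t, γ) with γ(0) = y (i.e. the pointwise infimum over all solutions with that initial condition, which is itself a solution). Then the map y ↦ γ_y is monotone: if y₁ ≤ y₂ then γ_{y₁}(t) ≤ γ_{y₂}(t) for all t ∈ [0,1]. -/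
/-- the minimal solution `γ_y` of `γ' = f(t,γ)`, `γ(0) = y` on `[0,1]`
(with `f` continuous and bounded) depends monotonically on the initial datum `y`. -/
theorem stmt_9 (f : ℝ × ℝ → ℝ) (hf : Continuous f) (hbd : ∃ M : ℝ, ∀ p, |f p| ≤ M)
    (γmin : ℝ → ℝ → ℝ)
    (hsol : ∀ y : ℝ,
      (∀ t ∈ Set.Icc (0:ℝ) 1,
        HasDerivWithinAt (γmin y) (f (t, γmin y t)) (Set.Icc (0:ℝ) 1) t) ∧
      γmin y 0 = y)
    (hmin : ∀ (y : ℝ) (γ : ℝ → ℝ),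
      (∀ t ∈ Set.Icc (0:ℝ) 1, HasDerivWithinAt γ (f (t, γ t)) (Set.Icc (0:ℝ) 1) t) →
      γ 0 = y → ∀ t ∈ Set.Icc (0:ℝ) 1, γmin y t ≤ γ t)
    (y₁ y₂ : ℝ) (h : y₁ ≤ y₂) :
    ∀ t ∈ Set.Icc (0:ℝ) 1, γmin y₁ t ≤ γmin y₂ t := by
  intro t ht
  by_contra hlt
  push_neg at hlt
  obtain ⟨hd1, h01⟩ := hsol y₁
  obtain ⟨hd2, h02⟩ := hsol y₂
  set γ₁ := γmin y₁ with hγ₁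
  set γ₂ := γmin y₂ with hγ₂
  have hc1 : ContinuousOn γ₁ (Set.Icc 0 1) := fun u hu => (hd1 u hu).continuousWithinAt
  have hc2 : ContinuousOn γ₂ (Set.Icc 0 1) := fun u hu => (hd2 u hu).continuousWithinAt
  -- the set of times up to t where γ₁ ≤ γ₂
  set S : Set ℝ := Set.Icc 0 t ∩ (fun u => γ₁ u - γ₂ u) ⁻¹' Set.Iic 0 with hS
  have hsub : Set.Icc (0:ℝ) t ⊆ Set.Icc 0 1 := Set.Icc_subset_Icc le_rfl ht.2
  have h0S : (0:ℝ) ∈ S := by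
    constructor
    · exact ⟨le_rfl, ht.1⟩
    · simp only [Set.mem_preimage, Set.mem_Iic, h01, h02]
      linarith
  have hSb : BddAbove S := ⟨t, fun u hu => hu.1.2⟩
  have hScl : IsClosed S := by
    apply ContinuousOn.preimage_isClosed_of_isClosed
    · exact (hc1.sub hc2).mono hsub
    · exact isClosed_Icc
    · exact isClosed_Iic
  set s := sSup S with hsdef
  have hsS : s ∈ S := hScl.csSup_mem ⟨0, h0S⟩ hSb
  have hs0 : (0:ℝ) ≤ s := hsS.1.1
  have hst : s ≤ t := hsS.1.2
  have hs1 : s ≤ 1 := hst.trans ht.2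
  have hsIcc : s ∈ Set.Icc (0:ℝ) 1 := ⟨hs0, hs1⟩
  have hsle : γ₁ s ≤ γ₂ s := by
    have := hsS.2
    simpa using this
  have hslt : s < t := by
    rcases lt_or_eq_of_le hst with h' | h'
    · exact h'
    · exfalso; rw [h'] at hsle; linarith
  have heq : γ₁ s = γ₂ s := by
    rcases lt_or_eq_of_le hsle with hlt' | h'
    · exfalso
      have hcw : ContinuousWithinAt (fun u => γ₂ u - γ₁ u) (Set.Icc (0:ℝ) 1) s :=
        (hc2.sub hc1) s hsIcc
      have hpos : γ₂ s - γ₁ s ∈ Set.Ioi (0:ℝ) := by simp; linarith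
      have hev : ∀ᶠ u in nhdsWithin s (Set.Icc (0:ℝ) 1), γ₁ u < γ₂ u := by
        filter_upwards [hcw.eventually_mem (Ioi_mem_nhds hpos)] with u hu
        simp only [Set.mem_Ioi] at hu; linarith
      have hIoc : Set.Ioc s t ⊆ Set.Icc (0:ℝ) 1 :=
        fun v hv => ⟨hs0.trans hv.1.le, hv.2.trans ht.2⟩
      have hle' : nhdsWithin s (Set.Ioc s t) ≤ nhdsWithin s (Set.Icc (0:ℝ) 1) :=
        nhdsWithin_mono _ hIoc
      have hne : (nhdsWithin s (Set.Ioc s t)).NeBot := by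
        apply mem_closure_iff_nhdsWithin_neBot.1
        rw [closure_Ioc hslt.ne]
        exact ⟨le_rfl, hslt.le⟩
      obtain ⟨v, hv1, hv2⟩ := ((hev.filter_mono hle').and self_mem_nhdsWithin).exists
      have hvS : v ∈ S := ⟨⟨hs0.trans hv2.1.le, hv2.2⟩, by
        simp only [Set.mem_preimage, Set.mem_Iic]; linarith⟩
      exact absurd (le_csSup hSb hvS) (not_le.2 hv2.1)
    · exact h'
  -- glued solution
  set η : ℝ → ℝ := fun u => if u ≤ s then γ₁ u else γ₂ u with hη
  have hη0 : η 0 = y₁ := by simp [hη, hs0, h01]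
  have hηs : η s = γ₁ s := by simp [hη]
  have hηd : ∀ u ∈ Set.Icc (0:ℝ) 1, HasDerivWithinAt η (f (u, η u)) (Set.Icc (0:ℝ) 1) u := by
    intro u hu
    rcases lt_trichotomy u s with hus | hus | hus
    · -- u < s : η = γ₁ near u
      have hmem : Set.Iio s ∈ nhdsWithin u (Set.Icc (0:ℝ) 1) :=
        nhdsWithin_le_nhds (Iio_mem_nhds hus)
      have heq' : η =ᶠ[nhdsWithin u (Set.Icc (0:ℝ) 1)] γ₁ :=
        Filter.eventually_of_mem hmem fun v hv => if_pos (Set.mem_Iio.mp hv).le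
      have hηu : η u = γ₁ u := if_pos hus.le
      rw [hηu]
      exact (hd1 u hu).congr_of_eventuallyEq heq' hηu
    · -- u = s : glue
      have heqa : γ₁ u = γ₂ u := by rw [hus]; exact heq
      have hηu : η u = γ₁ u := if_pos hus.le
      have hl : HasDerivWithinAt η (f (u, η u)) (Set.Icc (0:ℝ) 1 ∩ Set.Iic u) u := by
        have h' := (hd1 u hu).mono (Set.inter_subset_left (t := Set.Iic u))
        rw [hηu]
        exact h'.congr (fun v hv => if_pos (hv.2.trans hus.le)) hηu
      have hr : HasDerivWithinAt η (f (u, η u)) (Set.Icc (0:ℝ) 1 ∩ Set.Ici u) u := by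
        have h' := (hd2 u hu).mono (Set.inter_subset_left (t := Set.Ici u))
        rw [hηu, heqa]
        refine h'.congr (fun v hv => ?_) (hηu.trans heqa)
        by_cases hvs : v ≤ s
        · have hve : v = s := le_antisymm hvs (hus ▸ hv.2)
          rw [show η v = γ₁ v from if_pos hvs, hve, heq]
        · exact if_neg hvs
      refine (hl.union hr).mono fun v hv => ?_
      rcases le_total v u with h' | h'
      · exact Or.inl ⟨hv, h'⟩
      · exact Or.inr ⟨hv, h'⟩
    · -- u > s : η = γ₂ near u
      have hmem : Set.Ioi s ∈ nhdsWithin u (Set.Icc (0:ℝ) 1) :=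
        nhdsWithin_le_nhds (Ioi_mem_nhds hus)
      have heq' : η =ᶠ[nhdsWithin u (Set.Icc (0:ℝ) 1)] γ₂ :=
        Filter.eventually_of_mem hmem fun v hv => if_neg (not_le.2 (Set.mem_Ioi.mp hv))
      have hηu : η u = γ₂ u := if_neg (not_le.2 hus)
      rw [hηu]
      exact (hd2 u hu).congr_of_eventuallyEq heq' hηu
  have := hmin y₁ η hηd hη0 t ht
  have hηt : η t = γ₂ t := if_neg (not_le.2 hslt)
  rw [hηt] at this
  exact absurd this (not_le.2 hlt)
end

section
/- Let C* ⊂ C([0,1], ℝ) be a nonempty compact set (in the uniform topology) that is totally ordered by the pointwise order ⪯. Let (r_l)_{l∈ℕ} be an enumeration of ℚ ∩ [0,1], and define θ : C* → ℝ by θ(γ) := Σ_{l=0}^∞ 2^{-l} γ(r_l). Then θ is well-defined, continuous, and strictly order-preserving: γ ≺ γ' implies θ(γ) < θ(γ'). Consequently θ is injective, and θ is a homeomorphism from C* onto θ(C*). -/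
set_option maxHeartbeats 1000000


/-- on a compact chain `C* ⊂ C([0,1],ℝ)`, the functional
`θ(γ) = Σ_l 2^{-l} γ(r_l)` (where `(r_l)` enumerates `ℚ ∩ [0,1]`) is well defined,
continuous, strictly order preserving, injective, and a homeomorphism onto its image. -/
theorem stmt_13 (Cst : Set C(Set.Icc (0:ℝ) 1, ℝ)) (hne : Cst.Nonempty)
    (hcomp : IsCompact Cst)
    (hchain : ∀ γ ∈ Cst, ∀ γ' ∈ Cst, (∀ t, γ t ≤ γ' t) ∨ (∀ t, γ' t ≤ γ t))
    (r : ℕ → Set.Icc (0:ℝ) 1)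
    (hr1 : ∀ l : ℕ, ∃ q : ℚ, (q : ℝ) = (r l : ℝ))
    (hr2 : ∀ x : Set.Icc (0:ℝ) 1, (∃ q : ℚ, (q : ℝ) = (x : ℝ)) → ∃ l, r l = x)
    (θ : C(Set.Icc (0:ℝ) 1, ℝ) → ℝ)
    (hθ : θ = fun γ => ∑' l : ℕ, (1/2 : ℝ) ^ l * γ (r l)) :
    (∀ γ ∈ Cst, Summable fun l : ℕ => (1/2 : ℝ) ^ l * γ (r l)) ∧
    ContinuousOn θ Cst ∧
    (∀ γ ∈ Cst, ∀ γ' ∈ Cst, (∀ t, γ t ≤ γ' t) → γ ≠ γ' → θ γ < θ γ') ∧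
    Set.InjOn θ Cst ∧
    (∀ (u : ℕ → C(Set.Icc (0:ℝ) 1, ℝ)) (γ : C(Set.Icc (0:ℝ) 1, ℝ)),
      (∀ k, u k ∈ Cst) → γ ∈ Cst →
      Filter.Tendsto (fun k => θ (u k)) Filter.atTop (nhds (θ γ)) →
      Filter.Tendsto u Filter.atTop (nhds γ)) := by
  have hgeom : Summable fun l : ℕ => (1/2 : ℝ) ^ l :=
    summable_geometric_of_lt_one (by norm_num) (by norm_num)
  -- summability for every continuous map
  have hsum : ∀ γ : C(Set.Icc (0:ℝ) 1, ℝ),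
      Summable fun l : ℕ => (1/2 : ℝ) ^ l * γ (r l) := by
    intro γ
    apply Summable.of_norm
    refine Summable.of_nonneg_of_le (fun l => norm_nonneg _)
      (f := fun l => (1/2:ℝ)^l * ‖γ‖) ?_ (hgeom.mul_right _)
    intro l
    rw [norm_mul, norm_pow, Real.norm_eq_abs, abs_of_nonneg (by norm_num : (0:ℝ) ≤ 1/2)]
    exact mul_le_mul_of_nonneg_left (γ.norm_coe_le_norm (r l)) (by positivity)
  -- Lipschitz bound, hence continuity
  have hlip : Continuous θ := by
    rw [hθ]
    refine (LipschitzWith.of_dist_le_mul (K := 2) ?_).continuous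
    intro γ γ'
    rw [Real.dist_eq, ← Summable.tsum_sub (hsum γ) (hsum γ')]
    have h1 : ∀ l : ℕ, ‖(1/2:ℝ)^l * γ (r l) - (1/2:ℝ)^l * γ' (r l)‖
        ≤ (1/2:ℝ)^l * dist γ γ' := by
      intro l
      rw [← mul_sub, norm_mul, norm_pow, Real.norm_eq_abs,
        abs_of_nonneg (by norm_num : (0:ℝ) ≤ 1/2)]
      refine mul_le_mul_of_nonneg_left ?_ (by positivity)
      rw [Real.norm_eq_abs, ← Real.dist_eq]
      exact ContinuousMap.dist_apply_le_dist (r l)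
    calc ‖∑' l : ℕ, ((1/2:ℝ)^l * γ (r l) - (1/2:ℝ)^l * γ' (r l))‖
        ≤ ∑' l : ℕ, (1/2:ℝ)^l * dist γ γ' := by
          refine norm_tsum_le_tsum_norm ?_ |>.trans ?_
          · exact ((hsum γ).sub (hsum γ')).norm
          · exact Summable.tsum_le_tsum h1 ((hsum γ).sub (hsum γ')).norm (hgeom.mul_right _)
      _ = 2 * dist γ γ' := by
          rw [tsum_mul_right, tsum_geometric_two]
      _ ≤ (2:NNReal) * dist γ γ' := by norm_num
  -- strict monotonicity
  have hmono : ∀ γ γ' : C(Set.Icc (0:ℝ) 1, ℝ), (∀ t, γ t ≤ γ' t) → γ ≠ γ' →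
      θ γ < θ γ' := by
    intro γ γ' hle hne'
    -- find a point of strict inequality
    obtain ⟨t₀, ht₀⟩ : ∃ t, γ t < γ' t := by
      by_contra h
      push_neg at h
      exact hne' (ContinuousMap.ext fun t => le_antisymm (hle t) (h t))
    -- find an index l with strict inequality at r l
    obtain ⟨l₀, hl₀⟩ : ∃ l, γ (r l) < γ' (r l) := by
      have hopen : IsOpen {s : Set.Icc (0:ℝ) 1 | γ s < γ' s} :=
        isOpen_lt γ.continuous γ'.continuous
      obtain ⟨ε, hε, hball⟩ := Metric.isOpen_iff.1 hopen t₀ ht₀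
      rcases lt_or_eq_of_le t₀.2.2 with h1 | h1
      · obtain ⟨q, hq1, hq2⟩ := exists_rat_btwn
          (lt_min h1 (by linarith : (t₀:ℝ) < (t₀:ℝ) + ε))
        have hq0 : (0:ℝ) ≤ q := le_trans t₀.2.1 hq1.le
        have hq1' : (q:ℝ) ≤ 1 := le_of_lt (lt_of_lt_of_le hq2 (min_le_left _ _))
        set x : Set.Icc (0:ℝ) 1 := ⟨(q:ℝ), hq0, hq1'⟩
        have hx : x ∈ {s : Set.Icc (0:ℝ) 1 | γ s < γ' s} := by
          apply hball
          rw [Metric.mem_ball, Subtype.dist_eq, Real.dist_eq, abs_of_pos (by linarith)]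
          have := lt_of_lt_of_le hq2 (min_le_right _ _)
          linarith
        obtain ⟨l, hl⟩ := hr2 x ⟨q, rfl⟩
        exact ⟨l, by rw [hl]; exact hx⟩
      · obtain ⟨l, hl⟩ := hr2 t₀ ⟨1, by rw [h1]; norm_num⟩
        exact ⟨l, by rw [hl]; exact ht₀⟩
    rw [hθ]
    refine Summable.tsum_lt_tsum (i := l₀) ?_ ?_ (hsum γ) (hsum γ')
    · exact fun l => mul_le_mul_of_nonneg_left (hle (r l)) (by positivity)
    · exact mul_lt_mul_of_pos_left hl₀ (by positivity)
  have hinj : Set.InjOn θ Cst := by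
    intro γ hγ γ' hγ' hθeq
    by_contra hne'
    rcases hchain γ hγ γ' hγ' with h | h
    · exact absurd hθeq (ne_of_lt (hmono γ γ' h hne'))
    · exact absurd hθeq.symm (ne_of_lt (hmono γ' γ h (Ne.symm hne')))
  refine ⟨fun γ _ => hsum γ, hlip.continuousOn, fun γ _ γ' _ => hmono γ γ', hinj, ?_⟩
  intro u γ hu hγ hθu
  apply Filter.tendsto_of_subseq_tendsto
  intro ns hns
  obtain ⟨δ, hδ, φ, hφ, hconv⟩ := hcomp.tendsto_subseq (fun k => hu (ns k))
  refine ⟨φ, ?_⟩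
  have h1 : Filter.Tendsto (fun k => θ (u (ns (φ k)))) Filter.atTop (nhds (θ δ)) :=
    (hlip.tendsto δ).comp hconv
  have h2 : Filter.Tendsto (fun k => θ (u (ns (φ k)))) Filter.atTop (nhds (θ γ)) :=
    hθu.comp (hns.comp hφ.tendsto_atTop)
  have hδγ : δ = γ := hinj hδ hγ (tendsto_nhds_unique h1 h2)
  rw [← hδγ]
  exact hconv
end

section
/- Let C* ⊂ C([0,1], ℝ) be a nonempty compact set totally ordered by the pointwise order ⪯, with the property that for any γ₁, γ₂ ∈ C* with γ₁ ≺ γ₂ and any t₀ ∈ [0,1] and any value v with γ₁(t₀) < v < γ₂(t₀), there exists γ ∈ C* with γ₁ ⪯ γ ⪯ γ₂ and γ(t₀) = v. Then C* is connected in the uniform topology. -/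
open Set MeasureTheory intervalIntegral

noncomputable def myPhi (γ : C(Set.Icc (0:ℝ) 1, ℝ)) : ℝ :=
  ∫ t in (0:ℝ)..1, γ (Set.projIcc 0 1 zero_le_one t)

lemma myPhi_cont_comp (γ : C(Set.Icc (0:ℝ) 1, ℝ)) :
    Continuous (fun t : ℝ => γ (Set.projIcc 0 1 zero_le_one t)) :=
  γ.continuous.comp continuous_projIcc

lemma myPhi_strict {α β : C(Set.Icc (0:ℝ) 1, ℝ)} (hle : ∀ t, α t ≤ β t)
    (t₀ : Set.Icc (0:ℝ) 1) (hlt : α t₀ < β t₀) : myPhi α < myPhi β := by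
  apply intervalIntegral.integral_lt_integral_of_continuousOn_of_le_of_exists_lt
    zero_lt_one (myPhi_cont_comp α).continuousOn (myPhi_cont_comp β).continuousOn
    (fun x _ => hle _)
  exact ⟨t₀, t₀.2, by simpa [Set.projIcc_val] using hlt⟩

lemma myPhi_mono {α β : C(Set.Icc (0:ℝ) 1, ℝ)} (hle : ∀ t, α t ≤ β t) :
    myPhi α ≤ myPhi β := by
  apply intervalIntegral.integral_mono_on zero_le_one
    ((myPhi_cont_comp α).intervalIntegrable _ _)
    ((myPhi_cont_comp β).intervalIntegrable _ _)
  exact fun x _ => hle _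

lemma myPhi_continuous : Continuous myPhi := by
  have : LipschitzWith 1 myPhi := by
    apply LipschitzWith.of_dist_le_mul
    intro α β
    have h1 : myPhi α - myPhi β
        = ∫ t in (0:ℝ)..1, (α (Set.projIcc 0 1 zero_le_one t)
          - β (Set.projIcc 0 1 zero_le_one t)) := by
      rw [intervalIntegral.integral_sub ((myPhi_cont_comp α).intervalIntegrable _ _)
        ((myPhi_cont_comp β).intervalIntegrable _ _)]
      rfl
    rw [Real.dist_eq, h1]
    calc |∫ t in (0:ℝ)..1, (α (Set.projIcc 0 1 zero_le_one t)
          - β (Set.projIcc 0 1 zero_le_one t))| ≤ dist α β * |(1:ℝ) - 0| := by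
            rw [← Real.norm_eq_abs]
            apply intervalIntegral.norm_integral_le_of_norm_le_const
            intro x _
            rw [Real.norm_eq_abs, ← Real.dist_eq]
            exact ContinuousMap.dist_apply_le_dist _
      _ = 1 * dist α β := by simp
  exact this.continuous

/-- a nonempty compact chain `C* ⊂ C([0,1],ℝ)` with the intermediate-curve
property is connected in the uniform topology. -/
theorem stmt_14 (Cst : Set C(Set.Icc (0:ℝ) 1, ℝ)) (hne : Cst.Nonempty)
    (hcomp : IsCompact Cst)
    (hchain : ∀ γ ∈ Cst, ∀ γ' ∈ Cst, (∀ t, γ t ≤ γ' t) ∨ (∀ t, γ' t ≤ γ t))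
    (hmid : ∀ γ₁ ∈ Cst, ∀ γ₂ ∈ Cst, (∀ t, γ₁ t ≤ γ₂ t) →
      ∀ (t₀ : Set.Icc (0:ℝ) 1) (v : ℝ), γ₁ t₀ < v → v < γ₂ t₀ →
        ∃ γ ∈ Cst, (∀ t, γ₁ t ≤ γ t) ∧ (∀ t, γ t ≤ γ₂ t) ∧ γ t₀ = v) :
    IsConnected Cst := by
  -- key: the image of Cst under myPhi is order-connected, hence connected
  have key : IsConnected (myPhi '' Cst) := by
    refine ⟨hne.image _, ?_⟩
    rw [isPreconnected_iff_ordConnected]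
    constructor
    intro x hx y hy z hz
    by_contra hzn
    -- greatest element below z
    obtain ⟨γx, hγx, hγxz⟩ := hx
    obtain ⟨γy, hγy, hγyz⟩ := hy
    have hA : IsCompact (myPhi '' (Cst ∩ myPhi ⁻¹' Set.Iic z)) :=
      (hcomp.inter_right (isClosed_Iic.preimage myPhi_continuous)).image myPhi_continuous
    have hAne : (myPhi '' (Cst ∩ myPhi ⁻¹' Set.Iic z)).Nonempty :=
      ⟨x, γx, ⟨hγx, by simp [Set.mem_preimage, hγxz, hz.1]⟩, hγxz⟩
    obtain ⟨a, ha, hamax⟩ := hA.exists_isGreatest hAne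
    obtain ⟨α, ⟨hαC, hαz⟩, hαa⟩ := ha
    have hB : IsCompact (myPhi '' (Cst ∩ myPhi ⁻¹' Set.Ici z)) :=
      (hcomp.inter_right (isClosed_Ici.preimage myPhi_continuous)).image myPhi_continuous
    have hBne : (myPhi '' (Cst ∩ myPhi ⁻¹' Set.Ici z)).Nonempty :=
      ⟨y, γy, ⟨hγy, by simp [Set.mem_preimage, hγyz, hz.2]⟩, hγyz⟩
    obtain ⟨b, hb, hbmin⟩ := hB.exists_isLeast hBne
    obtain ⟨β, ⟨hβC, hβz⟩, hβb⟩ := hb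
    -- strict inequalities since z is not attained
    have hαlt : myPhi α < z := lt_of_le_of_ne hαz (fun h => hzn ⟨α, hαC, h⟩)
    have hβgt : z < myPhi β := lt_of_le_of_ne (Set.mem_Ici.mp hβz)
      (fun h => hzn ⟨β, hβC, h.symm⟩)
    -- α ⪯ β
    have hαβ : ∀ t, α t ≤ β t := by
      rcases hchain α hαC β hβC with h | h
      · exact h
      · exact absurd (myPhi_mono h) (not_le.mpr (hαlt.trans hβgt))
    -- a point of strict inequality
    have hex : ∃ t₀ : Set.Icc (0:ℝ) 1, α t₀ < β t₀ := by
      by_contra h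
      push_neg at h
      have : α = β := ContinuousMap.ext fun t => le_antisymm (hαβ t) (h t)
      rw [this] at hαlt
      exact absurd (hαlt.trans hβgt) (lt_irrefl _)
    obtain ⟨t₀, ht₀⟩ := hex
    obtain ⟨γ, hγC, hαγ, hγβ, hγv⟩ := hmid α hαC β hβC hαβ t₀ ((α t₀ + β t₀) / 2)
      (by linarith) (by linarith)
    have h1 : myPhi α < myPhi γ := myPhi_strict hαγ t₀ (by rw [hγv]; linarith)
    have h2 : myPhi γ < myPhi β := myPhi_strict hγβ t₀ (by rw [hγv]; linarith)
    rcases le_or_gt (myPhi γ) z with h | h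
    · have := hamax ⟨γ, ⟨hγC, h⟩, rfl⟩
      rw [← hαa] at this
      exact absurd (lt_of_lt_of_le h1 this) (lt_irrefl _)
    · have := hbmin ⟨γ, ⟨hγC, h.le⟩, rfl⟩
      rw [← hβb] at this
      exact absurd h2 (not_lt.mpr this)
  -- transfer back via a homeomorphism
  rw [isConnected_iff_connectedSpace]
  haveI : CompactSpace Cst := isCompact_iff_compactSpace.mp hcomp
  have hinj : Function.Injective (fun p : Cst => myPhi p.1) := by
    rintro ⟨α, hα⟩ ⟨β, hβ⟩ h
    simp only [Subtype.mk.injEq]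
    by_contra hne'
    have hex : ∀ (u v : C(Set.Icc (0:ℝ) 1, ℝ)), (∀ t, u t ≤ v t) → u ≠ v →
        myPhi u < myPhi v := by
      intro u v hle hne''
      have : ∃ t₀, u t₀ < v t₀ := by
        by_contra hh
        push_neg at hh
        exact hne'' (ContinuousMap.ext fun t => le_antisymm (hle t) (hh t))
      obtain ⟨t₀, ht₀⟩ := this
      exact myPhi_strict hle t₀ ht₀
    rcases hchain α hα β hβ with hc | hc
    · exact absurd h (ne_of_lt (hex α β hc hne'))
    · exact absurd h.symm (ne_of_lt (hex β α hc (Ne.symm hne')))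
  have hcont : Continuous (fun p : Cst => myPhi p.1) :=
    myPhi_continuous.comp continuous_subtype_val
  let e : Cst ≃ Set.range (fun p : Cst => myPhi p.1) := Equiv.ofInjective _ hinj
  have hecont : Continuous (e : Cst → Set.range (fun p : Cst => myPhi p.1)) :=
    hcont.subtype_mk _
  let h : Cst ≃ₜ Set.range (fun p : Cst => myPhi p.1) :=
    Continuous.homeoOfEquivCompactToT2 (f := e) hecont
  have hrange : Set.range (fun p : Cst => myPhi p.1) = myPhi '' Cst := by
    ext w
    simp [Set.range, Set.mem_image, Subtype.exists]
  haveI : ConnectedSpace (Set.range (fun p : Cst => myPhi p.1)) := by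
    rw [hrange]
    exact isConnected_iff_connectedSpace.mp key
  exact h.symm.surjective.connectedSpace h.symm.continuous
end

section
/- Let φ : ℝ × ℝⁿ → ℝ be continuous and bounded, b_s, c_s ∈ ℝ with b₁ > 0, and α_s := b_s/b₁ > 0 for a fixed s. Let γ_min : [0,T] → ℝ be the minimal solution of u' = b₁ φ̃(t,u) + c₁, u(0) = y₁, where φ̃(t,u) := φ(t, Ψ(t,u)) and Ψ(t,u) ∈ ℝⁿ is the vector with first coordinate u and s-th coordinate α_s u + t(c_s - α_s c₁) + (y_s - α_s y₁). Define γ_s(t) := α_s γ_min(t) + t(c_s - α_s c₁) + (y_s - α_s y₁). Then γ_s is the minimal s-th component: for every solution γ̂ = (γ̂₁,...,γ̂ₙ) of the full system γ̂_s' = b_s φ(t,γ̂) + c_s with γ̂(0) = (y₁,...,yₙ) one has γ_s(t) ≤ γ̂_s(t) for all t ∈ [0,T]. -/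
/-- the affine lift of the minimal solution of the reduced scalar ODE gives the
minimal `s`-th vertical component among all solutions of the full characteristic system. -/
theorem stmt_16 (n : ℕ) [NeZero n] (b c y : Fin n → ℝ) (hb : 0 < b 0)
    (s : Fin n) (hα : 0 < b s / b 0)
    (φ : ℝ × (Fin n → ℝ) → ℝ) (hφ : Continuous φ) (hbd : ∃ M : ℝ, ∀ p, |φ p| ≤ M)
    (T : ℝ) (hT : 0 < T)
    (Ψ : ℝ → ℝ → Fin n → ℝ)
    (hΨ : Ψ = fun t u k => (b k / b 0) * u + t * (c k - (b k / b 0) * c 0)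
      + (y k - (b k / b 0) * y 0))
    (γmin : ℝ → ℝ)
    (hsol : ∀ t ∈ Set.Icc (0:ℝ) T,
      HasDerivWithinAt γmin (b 0 * φ (t, Ψ t (γmin t)) + c 0) (Set.Icc (0:ℝ) T) t)
    (hinit : γmin 0 = y 0)
    (hmin : ∀ u : ℝ → ℝ,
      (∀ t ∈ Set.Icc (0:ℝ) T,
        HasDerivWithinAt u (b 0 * φ (t, Ψ t (u t)) + c 0) (Set.Icc (0:ℝ) T) t) →
      u 0 = y 0 → ∀ t ∈ Set.Icc (0:ℝ) T, γmin t ≤ u t) :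
    ∀ γhat : Fin n → ℝ → ℝ,
      (∀ k : Fin n, ∀ t ∈ Set.Icc (0:ℝ) T,
        HasDerivWithinAt (γhat k) (b k * φ (t, fun j => γhat j t) + c k)
          (Set.Icc (0:ℝ) T) t) →
      (∀ k, γhat k 0 = y k) →
      ∀ t ∈ Set.Icc (0:ℝ) T,
        (b s / b 0) * γmin t + t * (c s - (b s / b 0) * c 0)
          + (y s - (b s / b 0) * y 0) ≤ γhat s t := by
  intro γhat hγsol hγ0 t ht
  have hb0 : (b 0 : ℝ) ≠ 0 := ne_of_gt hb
  -- the affine relation between components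
  have hrel : ∀ k : Fin n, ∀ t ∈ Set.Icc (0:ℝ) T,
      γhat k t = (b k / b 0) * γhat 0 t + t * (c k - (b k / b 0) * c 0)
        + (y k - (b k / b 0) * y 0) := by
    intro k
    set g : ℝ → ℝ := fun t => γhat k t - ((b k / b 0) * γhat 0 t
        + t * (c k - (b k / b 0) * c 0)) with hg
    have hgderiv : ∀ x ∈ Set.Icc (0:ℝ) T,
        HasDerivWithinAt g 0 (Set.Icc (0:ℝ) T) x := by
      intro x hx
      have h1 := hγsol k x hx
      have h0 := hγsol 0 x hx
      have : HasDerivWithinAt g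
          ((b k * φ (x, fun j => γhat j x) + c k)
            - ((b k / b 0) * (b 0 * φ (x, fun j => γhat j x) + c 0)
              + (c k - (b k / b 0) * c 0))) (Set.Icc (0:ℝ) T) x := by
        exact (h1.sub (((h0.const_mul _)).add
          ((hasDerivWithinAt_id x _).mul_const (c k - (b k / b 0) * c 0))
          |>.congr_deriv (by ring)))
      convert this using 1
      field_simp
      ring
    have hgcont : ContinuousOn g (Set.Icc (0:ℝ) T) := fun x hx =>
      ((hgderiv x hx).continuousWithinAt)
    have hconst : ∀ x ∈ Set.Icc (0:ℝ) T, g x = g 0 := by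
      intro x hx
      refine constant_of_has_deriv_right_zero hgcont (fun z hz => ?_) x hx
      exact (hgderiv z (Set.mem_Icc_of_Ico hz)).mono_of_mem_nhdsWithin
        (Icc_mem_nhdsGE_of_mem hz)
    intro t ht
    have := hconst t ht
    have hg0 : g 0 = y k - (b k / b 0) * y 0 := by
      simp [hg, hγ0 k, hγ0 0]
    rw [hg0] at this
    simp only [hg] at this
    linarith
  -- γhat 0 solves the reduced scalar ODE
  have h0sol : ∀ t ∈ Set.Icc (0:ℝ) T,
      HasDerivWithinAt (γhat 0) (b 0 * φ (t, Ψ t (γhat 0 t)) + c 0)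
        (Set.Icc (0:ℝ) T) t := by
    intro t ht
    have : Ψ t (γhat 0 t) = fun j => γhat j t := by
      funext j
      rw [hΨ, hrel j t ht]
    rw [this]
    exact hγsol 0 t ht
  have hle := hmin (γhat 0) h0sol (hγ0 0) t ht
  have hrs := hrel s t ht
  nlinarith [hα]
end
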